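/- arXiv:2512.11983 — 4 statements merged into one kernel-verified Lean document; each statement's English description precedes it below -/
import Mathlib

section
/- The Stanley sequence with seed {0, 1} consists exactly of the nonnegative integers whose base-3 representation uses only the digits 0 and 1; in particular its k-th term (k ≥ 0, zero-indexed) is obtained by writing k in binary and reading the result in base 3. -/
/-- A set of naturals has no three-term arithmetic progression. -/
def ThreeAPFreeSet (S : Set ℕ) : Prop :=
  ∀ x ∈ S, ∀ y ∈ S, ∀ z ∈ S, x < y → y < z → x + z ≠ 2 * y

/-- `a` is the Stanley (greedy 3-AP-free) sequence with seed `{0, n}`: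
`a 0 = 0`, `a 1 = n`, and for `k ≥ 2`, `a k` is the least `c > a (k-1)` such that
adjoining `c` to the previously chosen terms keeps the set 3-AP-free. -/
def IsStanley (n : ℕ) (a : ℕ → ℕ) : Prop :=
  a 0 = 0 ∧ a 1 = n ∧
  ∀ k, 2 ≤ k →
    IsLeast {c | a (k - 1) < c ∧ ThreeAPFreeSet (insert c (a '' Set.Iio k))} (a k)

/-- Write  in binary and read the result in base 3. -/
def binToTer (k : ℕ) : ℕ := (Nat.digits 2 k).foldr (fun d acc => d + 3 * acc) 0

/-!
The set `T` of naturals whose ternary digits are all `0` or `1` is 3-AP-free: in `x + z = 2y`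
with all three in `T` there are no carries, so the digits force `x = z`. Conversely, a `c ∉ T`
closes a 3-AP `f < g < c` inside `T`: `g` replaces each digit `2` of `c` by `1` and `f` replaces
it by `0`. As `binToTer` enumerates `T` increasingly, the greedy choice after `binToTer (k - 1)`
must skip every number below `binToTer k`, and `binToTer k` itself is admissible.
-/

def IsZeroOneTernary (m : ℕ) : Prop := ∀ d ∈ Nat.digits 3 m, d ≤ 1

theorem isZeroOneTernary_iff {m : ℕ} :
    IsZeroOneTernary m ↔ m % 3 ≤ 1 ∧ IsZeroOneTernary (m / 3) := by
  rcases Nat.eq_zero_or_pos m with rfl | hm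
  · simp [IsZeroOneTernary]
  · simp [IsZeroOneTernary, Nat.digits_def' (by norm_num : 1 < 3) hm]

theorem isZeroOneTernary_ofDigits {L : List ℕ} (hL : ∀ d ∈ L, d ≤ 1) :
    IsZeroOneTernary (Nat.ofDigits 3 L) := by
  induction L with
  | nil => simp [IsZeroOneTernary]
  | cons d L ih =>
    have hd : d ≤ 1 := hL d List.mem_cons_self
    rw [Nat.ofDigits_cons, isZeroOneTernary_iff]
    have hdiv : (d + 3 * Nat.ofDigits 3 L) / 3 = Nat.ofDigits 3 L := by omega
    rw [hdiv]
    exact ⟨by omega, ih fun e he => hL e (List.mem_cons_of_mem d he)⟩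

theorem IsZeroOneTernary.eq_of_add_eq_two_mul {x y z : ℕ} (hx : IsZeroOneTernary x)
    (hy : IsZeroOneTernary y) (hz : IsZeroOneTernary z) (h : x + z = 2 * y) : x = z := by
  induction y using Nat.strong_induction_on generalizing x z with
  | _ y ih =>
    rcases Nat.eq_zero_or_pos y with rfl | hy0
    · omega
    rw [isZeroOneTernary_iff] at hx hy hz
    -- digits at most `1` produce no carry, so `h` splits into the last digit and the rest
    have hlow : x % 3 = z % 3 := by omega
    have hhigh : x / 3 + z / 3 = 2 * (y / 3) := by omega
    have := ih (y / 3) (by omega) hx.2 hy.2 hz.2 hhigh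
    omega

theorem threeAPFree_setOf_isZeroOneTernary : ThreeAPFree {m | IsZeroOneTernary m} :=
  threeAPFree_iff_eq_right.mpr fun _ hx _ hy _ hz h =>
    hx.eq_of_add_eq_two_mul hy hz (by omega)

theorem ThreeAPFree.threeAPFreeSet {S : Set ℕ} (hS : ThreeAPFree S) : ThreeAPFreeSet S :=
  fun x hx y hy z hz hxy hyz h => by
    have := threeAPFree_iff_eq_right.mp hS hx hy hz (by omega)
    omega

theorem Nat.ofDigits_map_le_ofDigits (b : ℕ) {L : List ℕ} {f : ℕ → ℕ}
    (hf : ∀ d ∈ L, f d ≤ d) : Nat.ofDigits b (L.map f) ≤ Nat.ofDigits b L := by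
  induction L with
  | nil => simp
  | cons d L ih =>
    simp only [List.map_cons, Nat.ofDigits_cons]
    have := ih fun e he => hf e (List.mem_cons_of_mem d he)
    have := hf d List.mem_cons_self
    gcongr

theorem Nat.ofDigits_map_add_ofDigits (b : ℕ) {L : List ℕ} {f g : ℕ → ℕ}
    (hfg : ∀ d ∈ L, f d + d = 2 * g d) :
    Nat.ofDigits b (L.map f) + Nat.ofDigits b L = 2 * Nat.ofDigits b (L.map g) := by
  induction L with
  | nil => simp
  | cons d L ih =>
    simp only [List.map_cons, Nat.ofDigits_cons]
    have hL := congrArg (b * ·) (ih fun e he => hfg e (List.mem_cons_of_mem d he))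
    have hd := hfg d List.mem_cons_self
    linarith

theorem exists_threeAP_of_not_isZeroOneTernary {c : ℕ} (hc : ¬IsZeroOneTernary c) :
    ∃ f g, IsZeroOneTernary f ∧ IsZeroOneTernary g ∧ f < g ∧ g < c ∧ f + c = 2 * g := by
  set L := Nat.digits 3 c
  have hL : ∀ d ∈ L, d < 3 := fun d hd => Nat.digits_lt_base (by norm_num) hd
  refine ⟨Nat.ofDigits 3 (L.map (· % 2)), Nat.ofDigits 3 (L.map (min · 1)), ?_, ?_⟩
  · exact isZeroOneTernary_ofDigits fun _ hd => by
      obtain ⟨d, -, rfl⟩ := List.mem_map.mp hd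
      omega
  have hgT : IsZeroOneTernary (Nat.ofDigits 3 (L.map (min · 1))) :=
    isZeroOneTernary_ofDigits fun _ hd => by
      obtain ⟨d, -, rfl⟩ := List.mem_map.mp hd
      omega
  have hsum := Nat.ofDigits_map_add_ofDigits 3 (f := (· % 2)) (g := (min · 1))
    (fun d hd => by have := hL d hd; omega)
  have hle := Nat.ofDigits_map_le_ofDigits 3 (f := (min · 1)) (L := L) (fun d _ => min_le_left d 1)
  rw [Nat.ofDigits_digits] at hsum hle
  have hne : Nat.ofDigits 3 (L.map (min · 1)) ≠ c := fun h => hc (h ▸ hgT)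
  exact ⟨hgT, by omega, by omega, hsum⟩

theorem binToTer_eq_ofDigits (k : ℕ) : binToTer k = Nat.ofDigits 3 (Nat.digits 2 k) := by
  simp [binToTer, Nat.ofDigits_eq_foldr, mul_comm]

theorem binToTer_eq_three_mul_add_mod_two (k : ℕ) :
    binToTer k = 3 * binToTer (k / 2) + k % 2 := by
  rcases Nat.eq_zero_or_pos k with rfl | hk
  · simp [binToTer]
  · rw [binToTer_eq_ofDigits, binToTer_eq_ofDigits, Nat.digits_def' (by norm_num) hk,
      Nat.ofDigits_cons]
    ring

theorem binToTer_strictMono : StrictMono binToTer := by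
  intro k l hkl
  induction l using Nat.strong_induction_on generalizing k with
  | _ l ih =>
    rw [binToTer_eq_three_mul_add_mod_two k, binToTer_eq_three_mul_add_mod_two l]
    rcases (by omega : k / 2 < l / 2 ∨ (k / 2 = l / 2 ∧ k % 2 < l % 2)) with h | ⟨h, h'⟩
    · have := ih (l / 2) (by omega) h
      omega
    · rw [h]
      omega

theorem isZeroOneTernary_binToTer (k : ℕ) : IsZeroOneTernary (binToTer k) := by
  rw [binToTer_eq_ofDigits]
  exact isZeroOneTernary_ofDigits fun d hd => Nat.le_of_lt_succ (Nat.digits_lt_base one_lt_two hd)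

theorem range_binToTer : Set.range binToTer = {m | IsZeroOneTernary m} := by
  ext m
  constructor
  · rintro ⟨k, rfl⟩
    exact isZeroOneTernary_binToTer k
  · intro hm
    -- the ternary digits of `m` are also the binary digits of their binary reading
    refine ⟨Nat.ofDigits 2 (Nat.digits 3 m), ?_⟩
    rw [binToTer_eq_ofDigits,
      Nat.digits_ofDigits 2 one_lt_two _ (fun d hd => Nat.lt_succ_of_le (hm d hd))
        (fun h => Nat.getLast_digit_ne_zero 3 (by rintro rfl; simp at h)),
      Nat.ofDigits_digits]

theorem image_binToTer_Iio (k : ℕ) :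
    binToTer '' Set.Iio k = {m | IsZeroOneTernary m ∧ m < binToTer k} := by
  ext m
  constructor
  · rintro ⟨j, hj, rfl⟩
    exact ⟨isZeroOneTernary_binToTer j, binToTer_strictMono hj⟩
  · rintro ⟨hm, hlt⟩
    obtain ⟨j, rfl⟩ : m ∈ Set.range binToTer := range_binToTer ▸ hm
    exact ⟨j, binToTer_strictMono.lt_iff_lt.mp hlt, rfl⟩

theorem isLeast_binToTer {k : ℕ} (hk : 1 ≤ k) :
    IsLeast {c | binToTer (k - 1) < c ∧ ThreeAPFreeSet (insert c (binToTer '' Set.Iio k))}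
      (binToTer k) := by
  rw [image_binToTer_Iio]
  refine ⟨⟨binToTer_strictMono (by omega), ?_⟩, ?_⟩
  · refine (threeAPFree_setOf_isZeroOneTernary.mono ?_).threeAPFreeSet
    rintro m (rfl | ⟨hm, -⟩)
    · exact isZeroOneTernary_binToTer k
    · exact hm
  rintro c ⟨hc, hfree⟩
  by_contra! hck
  by_cases hcT : IsZeroOneTernary c
  · obtain ⟨j, rfl⟩ : c ∈ Set.range binToTer := range_binToTer ▸ hcT
    have := binToTer_strictMono.lt_iff_lt.mp hc
    have := binToTer_strictMono.lt_iff_lt.mp hck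
    omega
  obtain ⟨f, g, hf, hg, hfg, hgc, hsum⟩ := exists_threeAP_of_not_isZeroOneTernary hcT
  exact hfree f (.inr ⟨hf, by omega⟩) g (.inr ⟨hg, by omega⟩) c (.inl rfl) hfg hgc hsum

theorem stanley_seed_0_1_eq_binToTer (a : ℕ → ℕ) (ha : IsStanley 1 a) :
    (∀ k, a k = binToTer k) ∧
      Set.range a = {m : ℕ | ∀ d ∈ Nat.digits 3 m, d ≤ 1} := by
  obtain ⟨h0, h1, hstep⟩ := ha
  have hak : ∀ k, a k = binToTer k := by
    intro k
    induction k using Nat.strong_induction_on with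
    | _ k ih =>
      match k with
      | 0 => simp [h0, binToTer]
      | 1 => simp [h1, binToTer]
      | k + 2 =>
        have hL := hstep (k + 2) (by omega)
        rw [Set.image_congr fun j (hj : j ∈ Set.Iio (k + 2)) => ih j hj,
          show k + 2 - 1 = k + 1 from rfl, ih (k + 1) (by omega)] at hL
        exact hL.unique (isLeast_binToTer (k := k + 2) (by omega))
  exact ⟨hak, (congrArg Set.range (funext hak)).trans range_binToTer⟩
end

section
/- The set of nonnegative integers whose base-3 representation uses only digits 0 and 1 contains no three-term arithmetic progression. -/
/-!
In any base `b ≥ 3`, adding two numbers whose digits are all `0` or `1` never produces a carry, so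
`x + z = 2 * y` holds digit by digit. In each position the digits of `x` and `z` sum to
twice the digit of `y`, which is `0` or `2`; hence the digits of `x` and `z` agree, and `x = z`.
-/

namespace Nat

variable {b : ℕ}

section DigitsLeOne

variable {m : ℕ} (hb : 1 < b) (h : ∀ d ∈ b.digits m, d ≤ 1)
include hb h

theorem mod_le_one_of_digits_le_one : m % b ≤ 1 := by
  rcases Nat.eq_zero_or_pos m with rfl | hm
  · simp
  · exact h _ (by rw [Nat.digits_def' hb hm]; exact List.mem_cons_self)

theorem digits_div_le_one_of_digits_le_one : ∀ d ∈ b.digits (m / b), d ≤ 1 := by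
  rcases Nat.eq_zero_or_pos m with rfl | hm
  · simp
  · exact fun d hd => h d (by rw [Nat.digits_def' hb hm]; exact List.mem_cons_of_mem _ hd)

end DigitsLeOne

theorem mod_eq_mod_and_div_add_div_of_add_eq_two_mul {x y z : ℕ} (hb : 3 ≤ b)
    (hx : x % b ≤ 1) (hy : y % b ≤ 1) (hz : z % b ≤ 1) (h : x + z = 2 * y) :
    x % b = z % b ∧ x / b + z / b = 2 * (y / b) := by
  -- both sides are at most `2 < b`, so the congruence mod `b` is an equality: no carry
  have hlast : x % b + z % b = 2 * (y % b) := by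
    have hmod : (x % b + z % b) % b = 2 * (y % b) % b := by
      rw [← Nat.add_mod, h, Nat.mul_mod, Nat.mod_eq_of_lt (by omega : 2 < b)]
    rwa [Nat.mod_eq_of_lt (by omega : x % b + z % b < b),
      Nat.mod_eq_of_lt (by omega : 2 * (y % b) < b)] at hmod
  refine ⟨by omega, Nat.eq_of_mul_eq_mul_left (by omega : 0 < b) ?_⟩
  have := Nat.div_add_mod x b
  have := Nat.div_add_mod y b
  have := Nat.div_add_mod z b
  linarith

theorem eq_of_add_eq_two_mul_of_digits_le_one (hb : 3 ≤ b) {x y z : ℕ}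
    (hx : ∀ d ∈ b.digits x, d ≤ 1) (hy : ∀ d ∈ b.digits y, d ≤ 1)
    (hz : ∀ d ∈ b.digits z, d ≤ 1) (h : x + z = 2 * y) : x = z := by
  induction y using Nat.strong_induction_on generalizing x z with
  | _ y ih =>
    rcases Nat.eq_zero_or_pos y with rfl | hy0
    · omega
    have hb1 : 1 < b := by omega
    obtain ⟨hmod, hdiv⟩ := mod_eq_mod_and_div_add_div_of_add_eq_two_mul hb
      (mod_le_one_of_digits_le_one hb1 hx) (mod_le_one_of_digits_le_one hb1 hy)
      (mod_le_one_of_digits_le_one hb1 hz) h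
    have hquot : x / b = z / b :=
      ih (y / b) (Nat.div_lt_self hy0 hb1) (digits_div_le_one_of_digits_le_one hb1 hx)
        (digits_div_le_one_of_digits_le_one hb1 hy) (digits_div_le_one_of_digits_le_one hb1 hz)
        hdiv
    rw [← Nat.div_add_mod x b, ← Nat.div_add_mod z b, hquot, hmod]

end Nat

theorem digits01_base3_apFree :
    ThreeAPFreeSet {m : ℕ | ∀ d ∈ Nat.digits 3 m, d ≤ 1} := by
  intro x hx y hy z hz hxy hyz h
  have := Nat.eq_of_add_eq_two_mul_of_digits_le_one le_rfl hx hy hz h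
  omega
end

section
/- If a is the Stanley sequence with seed {0, 1}, then for all m ≥ 0 and all 0 ≤ j < 2^m, a(2^m + j) = 3^m + a(j). -/
namespace StanleyAux

/-- binary digits read in base 3 -/
def f : ℕ → ℕ
  | 0 => 0
  | n + 1 => 3 * f ((n + 1) / 2) + (n + 1) % 2
decreasing_by exact Nat.div_lt_self (Nat.succ_pos n) one_lt_two

theorem f_eq (n : ℕ) : f n = 3 * f (n / 2) + n % 2 := by
  cases n with
  | zero => simp [f]
  | succ n => rw [f]

theorem f_zero : f 0 = 0 := by simp [f]

theorem f_one : f 1 = 1 := by rw [f_eq]; norm_num [f_zero]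

/-- all base-3 digits are ≤ 1 -/
def Good (n : ℕ) : Prop := ∀ i, n / 3 ^ i % 3 ≤ 1

theorem good_zero : Good 0 := fun i => by simp

theorem good_iff (n : ℕ) : Good n ↔ n % 3 ≤ 1 ∧ Good (n / 3) := by
  constructor
  · intro h
    refine ⟨by simpa using h 0, fun i => ?_⟩
    have := h (i + 1)
    rwa [pow_succ', ← Nat.div_div_eq_div_mul] at this
  · rintro ⟨h0, h1⟩ i
    cases i with
    | zero => simpa using h0
    | succ i =>
      have := h1 i
      rwa [Nat.div_div_eq_div_mul, ← pow_succ'] at this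

theorem f_lt : ∀ l k, k < l → f k < f l := by
  intro l
  induction l using Nat.strong_induction_on with
  | _ l ih =>
    intro k hkl
    have hl : 0 < l := by omega
    have hle : k / 2 ≤ l / 2 := Nat.div_le_div_right (le_of_lt hkl)
    rcases lt_or_eq_of_le hle with h | h
    · have := ih (l / 2) (Nat.div_lt_self hl one_lt_two) (k / 2) h
      rw [f_eq k, f_eq l]
      have hk2 := Nat.mod_lt k (y := 2) (by norm_num)
      have hl2 := Nat.mod_lt l (y := 2) (by norm_num)
      omega
    · rw [f_eq k, f_eq l, h]
      have ek := Nat.div_add_mod k 2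
      have el := Nat.div_add_mod l 2
      omega

theorem f_strictMono : StrictMono f := fun k l h => f_lt l k h

theorem good_f : ∀ k, Good (f k) := by
  intro k
  induction k using Nat.strong_induction_on with
  | _ k ih =>
    cases k with
    | zero => simpa [f] using good_zero
    | succ k =>
      rw [good_iff, f_eq]
      have h2 : (k + 1) % 2 < 2 := Nat.mod_lt _ (by norm_num)
      have e1 : (3 * f ((k + 1) / 2) + (k + 1) % 2) / 3 = f ((k + 1) / 2) := by omega
      have e2 : (3 * f ((k + 1) / 2) + (k + 1) % 2) % 3 = (k + 1) % 2 := by omega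
      rw [e1, e2]
      exact ⟨by omega, ih _ (Nat.div_lt_self (Nat.succ_pos k) one_lt_two)⟩

theorem f_surj : ∀ c, Good c → ∃ k, f k = c := by
  intro c
  induction c using Nat.strong_induction_on with
  | _ c ih =>
    intro hc
    rcases Nat.eq_zero_or_pos c with rfl | hpos
    · exact ⟨0, f_zero⟩
    · obtain ⟨h0, h1⟩ := (good_iff c).1 hc
      obtain ⟨q, hq⟩ := ih (c / 3) (Nat.div_lt_self hpos (by norm_num)) h1
      refine ⟨2 * q + c % 3, ?_⟩
      have e1 : (2 * q + c % 3) / 2 = q := by omega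
      have e2 : (2 * q + c % 3) % 2 = c % 3 := by omega
      rw [f_eq, e1, e2, hq]
      omega

theorem image_eq (k : ℕ) : f '' Set.Iio k = {c | Good c ∧ c < f k} := by
  ext c
  constructor
  · rintro ⟨j, hj, rfl⟩
    exact ⟨good_f j, f_lt k j hj⟩
  · rintro ⟨hg, hlt⟩
    obtain ⟨j, rfl⟩ := f_surj c hg
    exact ⟨j, f_strictMono.lt_iff_lt.1 hlt, rfl⟩

theorem ap_good : ∀ y x z, Good x → Good y → Good z → x + z = 2 * y → x = z := by
  intro y
  induction y using Nat.strong_induction_on with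
  | _ y ih =>
    intro x z hx hy hz hsum
    rcases Nat.eq_zero_or_pos y with rfl | hpos
    · omega
    · obtain ⟨hx0, hx1⟩ := (good_iff x).1 hx
      obtain ⟨hy0, hy1⟩ := (good_iff y).1 hy
      obtain ⟨hz0, hz1⟩ := (good_iff z).1 hz
      have ex := Nat.div_add_mod x 3
      have ey := Nat.div_add_mod y 3
      have ez := Nat.div_add_mod z 3
      have hdiv : x / 3 + z / 3 = 2 * (y / 3) := by omega
      have := ih (y / 3) (Nat.div_lt_self hpos (by norm_num)) (x / 3) (z / 3) hx1 hy1 hz1 hdiv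
      omega

theorem threeAPFree_of_good {S : Set ℕ} (h : ∀ c ∈ S, Good c) : ThreeAPFreeSet S := by
  intro x hx y hy z hz hxy hyz hsum
  have := ap_good y x z (h x hx) (h y hy) (h z hz) hsum
  omega

/-- cap each base-3 digit at 1 -/
def cap : ℕ → ℕ
  | 0 => 0
  | n + 1 => 3 * cap ((n + 1) / 3) + min ((n + 1) % 3) 1
decreasing_by exact Nat.div_lt_self (Nat.succ_pos n) (by norm_num)

theorem cap_eq (n : ℕ) : cap n = 3 * cap (n / 3) + min (n % 3) 1 := by
  cases n with
  | zero => simp [cap]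
  | succ n => rw [cap]

/-- digitwise 2 * min(d,1) - d -/
def lo : ℕ → ℕ
  | 0 => 0
  | n + 1 => 3 * lo ((n + 1) / 3) + (2 * min ((n + 1) % 3) 1 - (n + 1) % 3)
decreasing_by exact Nat.div_lt_self (Nat.succ_pos n) (by norm_num)

theorem lo_eq (n : ℕ) : lo n = 3 * lo (n / 3) + (2 * min (n % 3) 1 - n % 3) := by
  cases n with
  | zero => simp [lo]
  | succ n => rw [lo]

theorem good_cap : ∀ n, Good (cap n) := by
  intro n
  induction n using Nat.strong_induction_on with
  | _ n ih =>
    rcases Nat.eq_zero_or_pos n with rfl | hpos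
    · simpa [cap] using good_zero
    · rw [good_iff, cap_eq]
      have hm : min (n % 3) 1 ≤ 1 := min_le_right _ _
      generalize min (n % 3) 1 = d at hm
      have e1 : (3 * cap (n / 3) + d) / 3 = cap (n / 3) := by omega
      have e2 : (3 * cap (n / 3) + d) % 3 = d := by omega
      rw [e1, e2]
      exact ⟨hm, ih _ (Nat.div_lt_self hpos (by norm_num))⟩

theorem good_lo : ∀ n, Good (lo n) := by
  intro n
  induction n using Nat.strong_induction_on with
  | _ n ih =>
    rcases Nat.eq_zero_or_pos n with rfl | hpos
    · simpa [lo] using good_zero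
    · rw [good_iff, lo_eq]
      have hm : 2 * min (n % 3) 1 - n % 3 ≤ 1 := by
        rw [Nat.min_def]; split <;> omega
      generalize 2 * min (n % 3) 1 - n % 3 = d at hm
      have e1 : (3 * lo (n / 3) + d) / 3 = lo (n / 3) := by omega
      have e2 : (3 * lo (n / 3) + d) % 3 = d := by omega
      rw [e1, e2]
      exact ⟨hm, ih _ (Nat.div_lt_self hpos (by norm_num))⟩

theorem sum_eq : ∀ n, n + lo n = 2 * cap n := by
  intro n
  induction n using Nat.strong_induction_on with
  | _ n ih =>
    rcases Nat.eq_zero_or_pos n with rfl | hpos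
    · simp [lo, cap]
    · have hrec := ih (n / 3) (Nat.div_lt_self hpos (by norm_num))
      have e := Nat.div_add_mod n 3
      have h3 : n % 3 < 3 := Nat.mod_lt _ (by norm_num)
      rw [lo_eq, cap_eq]
      have hd : n % 3 + (2 * min (n % 3) 1 - n % 3) = 2 * min (n % 3) 1 := by
        rw [Nat.min_def]; split <;> omega
      generalize min (n % 3) 1 = d at hd
      omega

theorem cap_le : ∀ n, cap n ≤ n := by
  intro n
  induction n using Nat.strong_induction_on with
  | _ n ih =>
    rcases Nat.eq_zero_or_pos n with rfl | hpos
    · simp [cap]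
    · have hrec := ih (n / 3) (Nat.div_lt_self hpos (by norm_num))
      have e := Nat.div_add_mod n 3
      have hm : min (n % 3) 1 ≤ n % 3 := min_le_left _ _
      rw [cap_eq]
      omega

theorem cap_lt : ∀ n, ¬ Good n → cap n < n := by
  intro n
  induction n using Nat.strong_induction_on with
  | _ n ih =>
    intro hng
    rcases Nat.eq_zero_or_pos n with rfl | hpos
    · exact absurd good_zero hng
    · have e := Nat.div_add_mod n 3
      have h3 : n % 3 < 3 := Nat.mod_lt _ (by norm_num)
      rw [cap_eq]
      by_cases h2 : n % 3 = 2
      · have := cap_le (n / 3)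
        simp only [h2]
        omega
      · have hng' : ¬ Good (n / 3) := by
          intro hg
          exact hng ((good_iff n).2 ⟨by omega, hg⟩)
        have := ih (n / 3) (Nat.div_lt_self hpos (by norm_num)) hng'
        have hm : min (n % 3) 1 ≤ 1 := min_le_right _ _
        omega

theorem f_stanley : IsStanley 1 f := by
  refine ⟨f_zero, f_one, fun k hk => ?_⟩
  constructor
  · refine ⟨f_lt k (k - 1) (by omega), threeAPFree_of_good ?_⟩
    rintro c (rfl | hc)
    · exact good_f k
    · rw [image_eq] at hc
      exact hc.1
  · rintro c ⟨hlt, hAP⟩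
    by_contra hcon
    push_neg at hcon
    by_cases hg : Good c
    · obtain ⟨j, rfl⟩ := f_surj c hg
      have h1 : k - 1 < j := f_strictMono.lt_iff_lt.1 hlt
      have h2 : j < k := f_strictMono.lt_iff_lt.1 hcon
      omega
    · have hylt : cap c < c := cap_lt c hg
      have hsum : c + lo c = 2 * cap c := sum_eq c
      have hxy : lo c < cap c := by omega
      have hyin : cap c ∈ f '' Set.Iio k := by
        rw [image_eq]
        exact ⟨good_cap c, by omega⟩
      have hxin : lo c ∈ f '' Set.Iio k := by
        rw [image_eq]
        exact ⟨good_lo c, by omega⟩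
      exact hAP (lo c) (Set.mem_insert_iff.2 (Or.inr hxin))
        (cap c) (Set.mem_insert_iff.2 (Or.inr hyin))
        c (Set.mem_insert _ _) hxy hylt (by omega)

theorem eq_f (a : ℕ → ℕ) (ha : IsStanley 1 a) : ∀ k, a k = f k := by
  intro k
  induction k using Nat.strong_induction_on with
  | _ k ih =>
    match k, ih with
    | 0, _ => rw [ha.1, f_zero]
    | 1, _ => rw [ha.2.1, f_one]
    | (k + 2), ih =>
      have hset : {c | a (k + 2 - 1) < c ∧ ThreeAPFreeSet (insert c (a '' Set.Iio (k + 2)))}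
          = {c | f (k + 2 - 1) < c ∧ ThreeAPFreeSet (insert c (f '' Set.Iio (k + 2)))} := by
        have him : a '' Set.Iio (k + 2) = f '' Set.Iio (k + 2) := by
          ext c
          constructor
          · rintro ⟨j, hj, rfl⟩
            exact ⟨j, hj, (ih j hj).symm⟩
          · rintro ⟨j, hj, rfl⟩
            exact ⟨j, hj, ih j hj⟩
        rw [him, ih (k + 2 - 1) (by omega)]
      have h1 := ha.2.2 (k + 2) (by omega)
      have h2 := f_stanley.2.2 (k + 2) (by omega)
      rw [hset] at h1
      exact h1.unique h2

theorem f_self_similar : ∀ m j : ℕ, j < 2 ^ m → f (2 ^ m + j) = 3 ^ m + f j := by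
  intro m
  induction m with
  | zero =>
    intro j hj
    interval_cases j
    norm_num [f_one, f_zero]
  | succ m ih =>
    intro j hj
    have hq : j / 2 < 2 ^ m := by
      have e := Nat.div_add_mod j 2
      have : j < 2 * 2 ^ m := by rw [← pow_succ']; exact hj
      omega
    have hdiv : (2 ^ (m + 1) + j) / 2 = 2 ^ m + j / 2 := by
      rw [pow_succ']
      omega
    have hmod : (2 ^ (m + 1) + j) % 2 = j % 2 := by
      rw [pow_succ']
      omega
    rw [f_eq (2 ^ (m + 1) + j), hdiv, hmod, ih (j / 2) hq, f_eq j, pow_succ']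
    ring

end StanleyAux

theorem stanley_seed_0_1_self_similar (a : ℕ → ℕ) (ha : IsStanley 1 a) :
    ∀ m j : ℕ, j < 2 ^ m → a (2 ^ m + j) = 3 ^ m + a j := by
  intro m j hj
  rw [StanleyAux.eq_f a ha, StanleyAux.eq_f a ha]
  exact StanleyAux.f_self_similar m j hj
end

section
/- If A ⊆ [0, d) and B ⊆ ℕ are 3-AP-free, then A ∪ {4d·b + 2d : b ∈ B} is 3-AP-free. -/
theorem apFree_union_shifted_dilate (d : ℕ) (A B : Set ℕ)
    (hAd : ∀ x ∈ A, x < d) (hA : ThreeAPFreeSet A) (hB : ThreeAPFreeSet B) :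
    ThreeAPFreeSet (A ∪ {m : ℕ | ∃ b ∈ B, m = 4 * d * b + 2 * d}) := by
  rcases Nat.eq_zero_or_pos d with hd | hd
  · -- d = 0 : A is empty and the shifted set is {0}
    subst hd
    intro x hx y hy z hz hxy hyz heq
    have hx0 : x = 0 := by
      rcases hx with h | ⟨b, _, rfl⟩
      · exact absurd (hAd x h) (by omega)
      · simp
    have hy0 : y = 0 := by
      rcases hy with h | ⟨b, _, rfl⟩
      · exact absurd (hAd y h) (by omega)
      · simp
    omega
  · intro x hx y hy z hz hxy hyz heq
    rcases hx with hxA | ⟨b₁, hb₁, rfl⟩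
    · have hxd : x < d := hAd x hxA
      rcases hy with hyA | ⟨b₂, hb₂, rfl⟩
      · have hyd : y < d := hAd y hyA
        rcases hz with hzA | ⟨b₃, hb₃, rfl⟩
        · -- A A A
          exact hA x hxA y hyA z hzA hxy hyz heq
        · -- A A S : z ≥ 2d > 2y
          have hz2 : 2 * d ≤ 4 * d * b₃ + 2 * d := Nat.le_add_left _ _
          linarith
      · rcases hz with hzA | ⟨b₃, hb₃, rfl⟩
        · -- A S A : y ≥ 2d > z, contradicting y < z
          have hzd : z < d := hAd z hzA
          have hy2 : 2 * d ≤ 4 * d * b₂ + 2 * d := Nat.le_add_left _ _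
          linarith
        · -- A S S : the congruence case
          have hjk : x + 2 * d * (2 * b₃) = 2 * d * (4 * b₂ + 1) := by linarith
          rcases Nat.lt_trichotomy (2 * b₃) (4 * b₂ + 1) with h | h | h
          · have : 2 * d * (2 * b₃) + 2 * d ≤ 2 * d * (4 * b₂ + 1) := by
              have := Nat.mul_le_mul_left (2 * d) (show 2 * b₃ + 1 ≤ 4 * b₂ + 1 by omega)
              linarith [this]
            linarith
          · omega
          · have : 2 * d * (4 * b₂ + 1) + 2 * d ≤ 2 * d * (2 * b₃) := by
              have := Nat.mul_le_mul_left (2 * d) (show 4 * b₂ + 1 + 1 ≤ 2 * b₃ by omega)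
              linarith [this]
            linarith
    · rcases hy with hyA | ⟨b₂, hb₂, rfl⟩
      · -- S A * : impossible since x ≥ 2d > y
        have hyd : y < d := hAd y hyA
        have hx2 : 2 * d ≤ 4 * d * b₁ + 2 * d := Nat.le_add_left _ _
        linarith
      · rcases hz with hzA | ⟨b₃, hb₃, rfl⟩
        · -- S S A : impossible since y ≥ 2d > z
          have hzd : z < d := hAd z hzA
          have hy2 : 2 * d ≤ 4 * d * b₂ + 2 * d := Nat.le_add_left _ _
          linarith
        · -- S S S : reduce to B
          have h12 : b₁ < b₂ := by
            have h : 4 * d * b₁ < 4 * d * b₂ := by linarith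
            exact Nat.lt_of_mul_lt_mul_left h
          have h23 : b₂ < b₃ := by
            have h : 4 * d * b₂ < 4 * d * b₃ := by linarith
            exact Nat.lt_of_mul_lt_mul_left h
          have hsum : b₁ + b₃ = 2 * b₂ := by
            have h : 4 * d * (b₁ + b₃) = 4 * d * (2 * b₂) := by ring_nf; linarith
            exact Nat.eq_of_mul_eq_mul_left (by omega) h
          exact hB b₁ hb₁ b₂ hb₂ b₃ hb₃ h12 h23 hsum
end
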